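/- Let (Ω, F, P) be a probability space and let Z, W be real-valued random variables with W ≥ 0 a.s. Suppose that for positive constants β, c₁, c₂ we have E[exp(β Z²)] < ∞ and P(W < δ) ≥ c₁ exp(-c₂/δ²) for all sufficiently small δ > 0. Then for every ε > 0, lim_{δ↓0} P(Z ≥ ε δ^{-3/2} | W < δ) = 0. -/

import Mathlib

/-!
By Markov's inequality applied to `exp (β Z²)`, `P(Z ≥ ε δ^{-3/2}) ≤ C exp(-β ε² / δ³)`, while
`P(W < δ) ≥ c₁ exp(-c₂ / δ²)`. The conditional probability is therefore at most
`(C / c₁) exp(c₂ / δ² - β ε² / δ³)`, and the cubic term wins as `δ ↓ 0`.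
-/

open MeasureTheory Filter Real Topology

theorem measureReal_ge_le_integral_exp_sq_mul_exp_neg {Ω : Type*} [MeasurableSpace Ω]
    {μ : Measure Ω} [IsFiniteMeasure μ] {Z : Ω → ℝ} {β a : ℝ} (hβ : 0 ≤ β) (ha : 0 ≤ a)
    (hint : Integrable (fun ω => exp (β * Z ω ^ 2)) μ) :
    μ.real {ω | a ≤ Z ω} ≤ (∫ ω, exp (β * Z ω ^ 2) ∂μ) * exp (-(β * a ^ 2)) := by
  have hsub : {ω | a ≤ Z ω} ⊆ {ω | exp (β * a ^ 2) ≤ exp (β * Z ω ^ 2)} := fun ω hω =>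
    exp_le_exp.mpr (mul_le_mul_of_nonneg_left (pow_le_pow_left₀ ha hω 2) hβ)
  have hmarkov := mul_meas_ge_le_integral_of_nonneg
    (Eventually.of_forall fun ω => (exp_pos (β * Z ω ^ 2)).le) hint (exp (β * a ^ 2))
  rw [exp_neg, ← div_eq_mul_inv, le_div_iff₀' (exp_pos _)]
  exact (mul_le_mul_of_nonneg_left (measureReal_mono hsub) (exp_pos _).le).trans hmarkov

theorem tendsto_mul_sq_sub_mul_cube_atBot (a : ℝ) {b : ℝ} (hb : 0 < b) :
    Tendsto (fun t : ℝ => a * t ^ 2 - b * t ^ 3) atTop atBot := by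
  have hlin : Tendsto (fun t : ℝ => a + -b * t) atTop atBot :=
    tendsto_atBot_add_const_left _ a (tendsto_id.const_mul_atTop_of_neg (neg_neg_of_pos hb))
  refine ((tendsto_pow_atTop two_ne_zero).atTop_mul_atBot₀ hlin).congr fun t => ?_
  ring

theorem tendsto_div_sq_sub_div_cube_nhdsGT_zero (a : ℝ) {b : ℝ} (hb : 0 < b) :
    Tendsto (fun δ : ℝ => a / δ ^ 2 - b / δ ^ 3) (𝓝[>] 0) atBot := by
  refine ((tendsto_mul_sq_sub_mul_cube_atBot a hb).comp tendsto_inv_nhdsGT_zero).congr fun δ => ?_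
  simp only [Function.comp_apply, inv_pow, div_eq_mul_inv]

theorem rpow_neg_three_halves_sq {δ : ℝ} (hδ : 0 ≤ δ) :
    (δ ^ (-(3 : ℝ) / 2)) ^ 2 = (δ ^ 3)⁻¹ := by
  rw [← rpow_natCast, ← rpow_mul hδ, ← rpow_natCast, ← rpow_neg hδ]
  norm_num

theorem stmt3_general {Ω : Type*} [MeasurableSpace Ω] (P : Measure Ω) [IsProbabilityMeasure P]
    (Z W : Ω → ℝ)
    (β c₁ c₂ : ℝ) (hβ : 0 < β) (hc₁ : 0 < c₁)
    (hint : Integrable (fun ω => Real.exp (β * Z ω ^ 2)) P)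
    (hsmall : ∃ δ₀ > (0 : ℝ), ∀ δ ∈ Set.Ioc (0 : ℝ) δ₀,
      ENNReal.ofReal (c₁ * Real.exp (-c₂ / δ ^ 2)) ≤ P {ω | W ω < δ})
    (ε : ℝ) (hε : 0 < ε) :
    Tendsto (fun δ : ℝ =>
        (P ({ω | ε * δ ^ (-(3 : ℝ) / 2) ≤ Z ω} ∩ {ω | W ω < δ})).toReal
          / (P {ω | W ω < δ}).toReal)
      (nhdsWithin 0 (Set.Ioi 0)) (nhds 0) := by
  obtain ⟨δ₀, hδ₀, hsmall⟩ := hsmall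
  set C := ∫ ω, exp (β * Z ω ^ 2) ∂P
  have hbound : ∀ δ ∈ Set.Ioc 0 δ₀,
      (P ({ω | ε * δ ^ (-(3 : ℝ) / 2) ≤ Z ω} ∩ {ω | W ω < δ})).toReal
        / (P {ω | W ω < δ}).toReal ≤ C / c₁ * exp (c₂ / δ ^ 2 - β * ε ^ 2 / δ ^ 3) := by
    intro δ hδ
    have hnum : P.real ({ω | ε * δ ^ (-(3 : ℝ) / 2) ≤ Z ω} ∩ {ω | W ω < δ})
        ≤ C * exp (-(β * ε ^ 2 / δ ^ 3)) := by
      have hmarkov := measureReal_ge_le_integral_exp_sq_mul_exp_neg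
        (a := ε * δ ^ (-(3 : ℝ) / 2)) hβ.le (by have := hδ.1; positivity) hint
      rw [mul_pow, rpow_neg_three_halves_sq hδ.1.le, ← div_eq_mul_inv, ← mul_div_assoc] at hmarkov
      exact (measureReal_mono Set.inter_subset_left).trans hmarkov
    have hden : c₁ * exp (-c₂ / δ ^ 2) ≤ (P {ω | W ω < δ}).toReal :=
      (ENNReal.ofReal_le_iff_le_toReal (measure_ne_top P _)).mp (hsmall δ hδ)
    calc _ ≤ C * exp (-(β * ε ^ 2 / δ ^ 3)) / (c₁ * exp (-c₂ / δ ^ 2)) :=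
          div_le_div₀ (by positivity) hnum (by positivity) hden
      _ = C / c₁ * exp (c₂ / δ ^ 2 - β * ε ^ 2 / δ ^ 3) := by
          rw [mul_div_mul_comm, ← exp_sub]
          ring_nf
  have hlim : Tendsto (fun δ => C / c₁ * exp (c₂ / δ ^ 2 - β * ε ^ 2 / δ ^ 3)) (𝓝[>] 0) (𝓝 0) := by
    have hexponent := tendsto_div_sq_sub_div_cube_nhdsGT_zero c₂ (by positivity : 0 < β * ε ^ 2)
    simpa using (tendsto_exp_atBot.comp hexponent).const_mul (C / c₁)
  refine tendsto_of_tendsto_of_tendsto_of_le_of_le' tendsto_const_nhds hlim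
    (Eventually.of_forall fun δ => by positivity) ?_
  filter_upwards [Ioc_mem_nhdsGT hδ₀] using hbound

/-- If `E[exp(β Z²)] < ∞` and `P(W < δ) ≥ c₁ exp(-c₂/δ²)` for all small `δ > 0`
(with `W ≥ 0` a.s.), then for every `ε > 0`,
`lim_{δ↓0} P(Z ≥ ε δ^{-3/2} | W < δ) = 0`. -/
theorem stmt3 {Ω : Type*} [MeasurableSpace Ω] (P : Measure Ω) [IsProbabilityMeasure P]
    (Z W : Ω → ℝ) (hW : ∀ᵐ ω ∂P, 0 ≤ W ω)
    (β c₁ c₂ : ℝ) (hβ : 0 < β) (hc₁ : 0 < c₁) (hc₂ : 0 < c₂)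
    (hint : Integrable (fun ω => Real.exp (β * Z ω ^ 2)) P)
    (hsmall : ∃ δ₀ > (0 : ℝ), ∀ δ ∈ Set.Ioc (0 : ℝ) δ₀,
      ENNReal.ofReal (c₁ * Real.exp (-c₂ / δ ^ 2)) ≤ P {ω | W ω < δ})
    (ε : ℝ) (hε : 0 < ε) :
    Tendsto (fun δ : ℝ =>
        (P ({ω | ε * δ ^ (-(3 : ℝ) / 2) ≤ Z ω} ∩ {ω | W ω < δ})).toReal
          / (P {ω | W ω < δ}).toReal)
      (nhdsWithin 0 (Set.Ioi 0)) (nhds 0) :=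
  stmt3_general P Z W β c₁ c₂ hβ hc₁ hint hsmall ε hε
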